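/- The linear map n_T → H sending each rooted tree T to δ_T is an injective homomorphism of Lie algebras from n_T (with the Connes–Kreimer bracket) to H equipped with the commutator bracket [f,g] := f×g − g×f, and its image is exactly the space of primitive elements of H (those f with Δ(f) = f⊗δ_∅ + δ_∅⊗f). -/

import Mathlib

/-!
On one-tree forests the Hall product `δ_S × δ_T` counts the cuts of a forest `M` whose pruned
part is the single tree `S` and whose trunk is the single tree `T`.  If `M` is one tree these are
single-edge cuts, so this coefficient is that of the grafting `S * T`; otherwise `M` consists of
two trees, one cut off entirely and the other left intact, and the number of such cuts is
symmetric in `S` and `T`.  Hence the commutator of `δ_S` and `δ_T` is `δ_{[S,T]}`.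

Since `Δ δ_M = Σ_{A + B = M} δ_A ⊗ δ_B`, the coefficient of `Δ f` at `(A, B)` is `f (A + B)`.
Comparing with `f ⊗ δ_∅ + δ_∅ ⊗ f` forces `f ∅ = f ∅ + f ∅` and `f (A + B) = 0` for non-empty
`A, B`: a primitive element is supported on the one-tree forests, i.e. lies in the image of `n_T`.
-/

open scoped Classical

/-- Concrete (labeled) rooted trees: a root with a list of subtrees. -/
inductive RTree : Type
  | node : List RTree → RTree

/-- Shapes of admissible cuts: at each tree, either the full cut
(everything, including the root, goes to the pruned part `P`), or a choice of
an admissible cut of each child subtree.  A `full` occurring strictly inside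
corresponds to cutting the edge above that vertex. -/
inductive CutShape : Type
  | full
  | branch : List CutShape → CutShape

namespace CK

/-- Number of vertices of a forest. -/
def sizeL : List RTree → ℕ
  | [] => 0
  | .node l :: ts => 1 + sizeL l + sizeL ts

/-- All admissible cuts of a forest (a choice of admissible cut of each tree). -/
def cutsF : List RTree → List (List CutShape)
  | [] => [[]]
  | .node l :: ts =>
      (CutShape.full :: (cutsF l).map CutShape.branch).flatMap
        fun c => (cutsF ts).map (c :: ·)

/-- The root part `R_C(F)` of a cut. -/
def Rcut : List RTree → List CutShape → List RTree
  | [], _ => []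
  | _ :: _, [] => []
  | .node _ :: ts, .full :: cs => Rcut ts cs
  | .node l :: ts, .branch ds :: cs => RTree.node (Rcut l ds) :: Rcut ts cs

/-- The pruned part `P_C(F)` of a cut. -/
def Pcut : List RTree → List CutShape → List RTree
  | [], _ => []
  | _ :: _, [] => []
  | .node l :: ts, .full :: cs => RTree.node l :: Pcut ts cs
  | .node l :: ts, .branch ds :: cs => Pcut l ds ++ Pcut ts cs

/-- Number of `full`s occurring in a cut. -/
def fullsL : List CutShape → ℕ
  | [] => 0
  | .full :: cs => 1 + fullsL cs
  | .branch ds :: cs => fullsL ds + fullsL cs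

/-- A list of concrete forests containing (representatives of) every forest
with at most `n` vertices. -/
def forestsUpTo : ℕ → List (List RTree)
  | 0 => [[]]
  | n+1 => [] :: (forestsUpTo n).flatMap fun l => (forestsUpTo n).map fun F => RTree.node l :: F

/-- Isomorphism of rooted trees (non-planar): a root-preserving bijection, i.e.
the lists of subtrees agree up to permutation and isomorphism. -/
inductive Iso : RTree → RTree → Prop
  | node {l₁ l l₂ : List RTree} : List.Forall₂ Iso l₁ l → l.Perm l₂ → Iso (.node l₁) (.node l₂)

/-- Isomorphism classes of rooted trees. -/
abbrev TreeClass : Type := Quot Iso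

/-- Isomorphism classes of rooted forests = multisets of tree classes.
The empty forest is `0`. -/
abbrev ForestClass : Type := Multiset TreeClass

/-- Isomorphism class of a tree. -/
def clT (t : RTree) : TreeClass := Quot.mk _ t

/-- Isomorphism class of a forest. -/
def clF (F : List RTree) : ForestClass := (F.map clT : List TreeClass)

/-- A concrete representative of a forest class. -/
noncomputable def repF (M : ForestClass) : List RTree := M.toList.map Quot.out

/-- A concrete representative of a tree class. -/
noncomputable def repT (T : TreeClass) : RTree := T.out

/-- Number of vertices of a forest class. -/
noncomputable def sizeC (M : ForestClass) : ℕ := sizeL (repF M)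

/-- Number of vertices of a tree class. -/
noncomputable def sizeT (T : TreeClass) : ℕ := sizeL [repT T]

/-- The Hall algebra `H`: finitely supported ℚ-valued functions on
isomorphism classes of rooted forests, with basis the delta functions. -/
abbrev H : Type := ForestClass →₀ ℚ

/-- The basis element `δ_A` of `H`. -/
noncomputable def delta (A : ForestClass) : H := Finsupp.single A 1

/-- `n(A,B;M)`: the number of admissible cuts `C` of `M` with
`P_C(M) ≅ A` and `R_C(M) ≅ B`. -/
noncomputable def nCuts (A B M : ForestClass) : ℕ :=
  (cutsF (repF M)).countP fun c =>
    decide (clF (Pcut (repF M) c) = A ∧ clF (Rcut (repF M) c) = B)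

/-- A finite set of forest classes containing all classes with at most `n`
vertices. -/
noncomputable def forestCand (n : ℕ) : Finset ForestClass :=
  ((forestsUpTo n).map clF).toFinset

/-- A finite set of tree classes containing all classes with at most `n+1`
vertices. -/
noncomputable def treeCand (n : ℕ) : Finset TreeClass :=
  ((forestsUpTo n).map fun F => clT (RTree.node F)).toFinset

/-- The Hall product on basis elements: `δ_A × δ_B = Σ_M n(A,B;M)·δ_M`
(every `M` with `n(A,B;M) ≠ 0` has exactly `sizeC A + sizeC B` vertices). -/
noncomputable def mulBasis (A B : ForestClass) : H :=
  ∑ M ∈ forestCand (sizeC A + sizeC B), (nCuts A B M : ℚ) • delta M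

/-- The Hall product on `H`, extended bilinearly from basis elements. -/
noncomputable def hmul (f g : H) : H :=
  f.sum fun A a => g.sum fun B b => (a * b) • mulBasis A B

/-- The Connes-Kreimer Lie algebra `n_T` (as a vector space): the span of
isomorphism classes of rooted trees. -/
abbrev nT : Type := TreeClass →₀ ℚ

/-- The basis element of `n_T` corresponding to a rooted tree `T`. -/
noncomputable def tau (T : TreeClass) : nT := Finsupp.single T 1

/-- `a(T₁,T₂;T)`: the number of edges `e` of `T` such that the single-edge cut
at `e` has pruned part `≅ T₁` and root part `≅ T₂`. -/
noncomputable def aCount (T₁ T₂ T : TreeClass) : ℕ :=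
  (cutsF [repT T]).countP fun c =>
    decide (fullsL c = 1 ∧ clF (Pcut [repT T] c) = ({T₁} : Multiset TreeClass)
      ∧ clF (Rcut [repT T] c) = ({T₂} : Multiset TreeClass))

/-- The grafting (pre-Lie) product on basis elements:
`T₁ * T₂ = Σ_T a(T₁,T₂;T)·T`. -/
noncomputable def graftBasis (T₁ T₂ : TreeClass) : nT :=
  ∑ T ∈ treeCand (sizeT T₁ + sizeT T₂), (aCount T₁ T₂ T : ℚ) • tau T

/-- The grafting (pre-Lie) product on `n_T`, extended bilinearly. -/
noncomputable def graft (x y : nT) : nT :=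
  x.sum fun T₁ a => y.sum fun T₂ b => (a * b) • graftBasis T₁ T₂

/-- The Connes-Kreimer bracket `[x,y] = x*y - y*x` on `n_T`. -/
noncomputable def ckBracket (x y : nT) : nT := graft x y - graft y x

/-- `Ẽ_A δ_B = Σ_C δ_{R_C(B)}`, the sum over admissible cuts `C` of `B` with
`P_C(B) ≅ A`. -/
noncomputable def elimBasis (A B : ForestClass) : H :=
  (((cutsF (repF B)).filter fun c => decide (clF (Pcut (repF B) c) = A)).map
    fun c => delta (clF (Rcut (repF B) c))).sum

/-- The elimination operator `E_A` (here on `H ≅ H*`, identifying `φ_B` with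
`δ_B`). -/
noncomputable def elim (A : ForestClass) : H →ₗ[ℚ] H :=
  Finsupp.lsum ℚ fun B => LinearMap.toSpanSingleton ℚ H (elimBasis A B)

/-- `Ẽ^top_A δ_B = Σ_C δ_{P_C(B)}`, the sum over admissible cuts `C` of `B`
with `R_C(B) ≅ A`. -/
noncomputable def topElimBasis (A B : ForestClass) : H :=
  (((cutsF (repF B)).filter fun c => decide (clF (Rcut (repF B) c) = A)).map
    fun c => delta (clF (Pcut (repF B) c))).sum

/-- The top-elimination operator `E^top_A`. -/
noncomputable def topElim (A : ForestClass) : H →ₗ[ℚ] H :=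
  Finsupp.lsum ℚ fun B => LinearMap.toSpanSingleton ℚ H (topElimBasis A B)

/-- `H ⊗ H`, realized as finitely supported functions on pairs of classes. -/
abbrev H2 : Type := (ForestClass × ForestClass) →₀ ℚ

/-- `Δ(δ_M) = Σ δ_A ⊗ δ_B`, the sum over ordered pairs `(A,B)` of classes with
`A ⊔ B ≅ M`. -/
noncomputable def deltaBasis (M : ForestClass) : H2 :=
  ∑ A ∈ M.powerset.toFinset, Finsupp.single (A, M - A) 1

/-- The coproduct `Δ : H → H ⊗ H`. -/
noncomputable def coprod : H →ₗ[ℚ] H2 :=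
  Finsupp.lsum ℚ fun M => LinearMap.toSpanSingleton ℚ H2 (deltaBasis M)

/-- The linear map `n_T → H` sending each rooted tree `T` to `δ_{T}`
(the delta function of the one-tree forest `{T}`). -/
noncomputable def embed : nT →ₗ[ℚ] H :=
  Finsupp.lmapDomain ℚ ℚ fun T => ({T} : Multiset TreeClass)

end CK

theorem List.sum_map_ite_eq_countP {α : Type*} (l : List α) (p : α → Prop) [DecidablePred p] :
    (l.map fun a => if p a then 1 else 0).sum = l.countP fun a => p a := by
  induction l with
  | nil => rfl
  | cons a l ih => simp [List.countP_cons, ih, Nat.add_comm]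

theorem List.countP_decide_congr {α : Type*} {l : List α} {p q : α → Prop} [DecidablePred p]
    [DecidablePred q] (h : ∀ a ∈ l, p a ↔ q a) :
    l.countP (fun a => p a) = l.countP (fun a => q a) :=
  List.countP_congr fun a ha => by simpa using h a ha

theorem List.countP_const_and {α : Type*} (l : List α) (q : Prop) [Decidable q] (r : α → Prop)
    [DecidablePred r] : l.countP (fun a => q ∧ r a) = if q then l.countP (fun a => r a) else 0 := by
  by_cases hq : q <;> simp [hq]

theorem Finsupp.finsetSum_smul_single_one_apply {α R : Type*} [Semiring R] {s : Finset α}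
    {c : α → R} {a : α} (h : a ∉ s → c a = 0) :
    (∑ i ∈ s, c i • Finsupp.single i (1 : R)) a = c a := by
  classical
  by_cases ha : a ∈ s <;> simp [Finsupp.finsetSum_apply, Finsupp.single_apply, ha, h]

theorem Finsupp.sum_sum_smul_comm {α R M : Type*} [CommSemiring R] [AddCommMonoid M] [Module R M]
    (x y : α →₀ R)
    {K : α → α → M} (hK : ∀ S T, K S T = K T S) :
    (x.sum fun S a => y.sum fun T b => (a * b) • K S T) =
      y.sum fun T b => x.sum fun S a => (b * a) • K T S := by
  rw [Finsupp.sum_comm]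
  simp only [mul_comm, hK]

theorem Finsupp.mapDomain_prodMk_left_apply {α β M : Type*} [AddCommMonoid M] [DecidableEq β]
    (f : α →₀ M) (b₀ : β) (a : α) (b : β) :
    Finsupp.mapDomain (fun a => (a, b₀)) f (a, b) = if b = b₀ then f a else 0 := by
  split_ifs with hb
  · subst hb
    exact Finsupp.mapDomain_apply (Prod.mk_left_injective b) f a
  · exact Finsupp.mapDomain_of_notMem_range f _ fun ⟨_, h⟩ => hb (congrArg Prod.snd h).symm

theorem Finsupp.mapDomain_prodMk_right_apply {α β M : Type*} [AddCommMonoid M] [DecidableEq α]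
    (f : β →₀ M) (a₀ : α) (a : α) (b : β) :
    Finsupp.mapDomain (fun b => (a₀, b)) f (a, b) = if a = a₀ then f b else 0 := by
  split_ifs with ha
  · subst ha
    exact Finsupp.mapDomain_apply (Prod.mk_right_injective a) f b
  · exact Finsupp.mapDomain_of_notMem_range f _ fun ⟨_, h⟩ => ha (congrArg Prod.fst h).symm

theorem Multiset.forall_ne_singleton_imp_eq_zero_iff {α G : Type*} [AddGroup G]
    (f : Multiset α → G) :
    (∀ M, (∀ a, M ≠ {a}) → f M = 0) ↔
      ∀ A B, f (A + B) = (if B = 0 then f A else 0) + (if A = 0 then f B else 0) := by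
  constructor
  · intro hf A B
    by_cases hA : A = 0 <;> by_cases hB : B = 0
    · subst hA hB
      simp [hf 0 fun a h => Multiset.singleton_ne_zero a h.symm]
    all_goals simp only [hA, hB, if_true, if_false, zero_add, add_zero]
    refine hf _ fun a h => ?_
    have := congrArg Multiset.card h
    rw [Multiset.card_add, Multiset.card_singleton] at this
    have := Multiset.card_pos.2 hA
    have := Multiset.card_pos.2 hB
    omega
  · intro h M hM
    obtain rfl | ⟨a, ha⟩ := M.empty_or_exists_mem
    · simpa using h 0 0
    have hrest : M.erase a ≠ 0 := fun he => hM a (by rw [← Multiset.cons_erase ha, he]; rfl)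
    simpa [hrest, Multiset.singleton_add, Multiset.cons_erase ha] using h {a} (M.erase a)

namespace CK

theorem mem_cutsF_nil {c : List CutShape} : c ∈ cutsF [] ↔ c = [] := by
  simp [cutsF]

theorem mem_cutsF_cons {l ts : List RTree} {c : List CutShape} :
    c ∈ cutsF (.node l :: ts) ↔
      (∃ cs ∈ cutsF ts, c = .full :: cs) ∨
        ∃ ds ∈ cutsF l, ∃ cs ∈ cutsF ts, c = .branch ds :: cs := by
  simp only [cutsF, List.mem_flatMap, List.mem_cons, List.mem_map]
  constructor
  · rintro ⟨c₀, rfl | ⟨ds, hds, rfl⟩, cs, hcs, rfl⟩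
    · exact .inl ⟨cs, hcs, rfl⟩
    · exact .inr ⟨ds, hds, cs, hcs, rfl⟩
  · rintro (⟨cs, hcs, rfl⟩ | ⟨ds, hds, cs, hcs, rfl⟩)
    · exact ⟨.full, .inl rfl, cs, hcs, rfl⟩
    · exact ⟨.branch ds, .inr ⟨ds, hds, rfl⟩, cs, hcs, rfl⟩

@[elab_as_elim]
theorem cutsF_induction {motive : (F : List RTree) → (c : List CutShape) → c ∈ cutsF F → Prop}
    (nil : motive [] [] (mem_cutsF_nil.2 rfl))
    (full : ∀ l ts cs (hcs : cs ∈ cutsF ts), motive ts cs hcs →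
      motive (.node l :: ts) (.full :: cs) (mem_cutsF_cons.2 (.inl ⟨cs, hcs, rfl⟩)))
    (branch : ∀ l ts ds cs (hds : ds ∈ cutsF l) (hcs : cs ∈ cutsF ts),
      motive l ds hds → motive ts cs hcs →
      motive (.node l :: ts) (.branch ds :: cs) (mem_cutsF_cons.2 (.inr ⟨ds, hds, cs, hcs, rfl⟩))) :
    ∀ F c (hc : c ∈ cutsF F), motive F c hc
  | [], c, hc => by
    obtain rfl := mem_cutsF_nil.1 hc
    exact nil
  | .node l :: ts, c, hc => by
    obtain ⟨cs, hcs, rfl⟩ | ⟨ds, hds, cs, hcs, rfl⟩ := mem_cutsF_cons.1 hc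
    · exact full l ts cs hcs (cutsF_induction nil full branch ts cs hcs)
    · exact branch l ts ds cs hds hcs (cutsF_induction nil full branch l ds hds)
        (cutsF_induction nil full branch ts cs hcs)

theorem sizeL_cons (t : RTree) (ts : List RTree) : sizeL (t :: ts) = sizeL [t] + sizeL ts := by
  cases t
  simp [sizeL]

theorem sizeL_append (F G : List RTree) : sizeL (F ++ G) = sizeL F + sizeL G := by
  induction F with
  | nil => simp [sizeL]
  | cons t ts ih => rw [List.cons_append, sizeL_cons t (ts ++ G), sizeL_cons t ts, ih, Nat.add_assoc]

theorem length_Pcut {F : List RTree} {c : List CutShape} (hc : c ∈ cutsF F) :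
    (Pcut F c).length = fullsL c := by
  induction F, c, hc using cutsF_induction with
  | nil => simp [Pcut, fullsL]
  | full l ts cs _ ih => simp [Pcut, fullsL, ih, Nat.add_comm]
  | branch l ts ds cs _ _ ih₁ ih₂ => simp [Pcut, fullsL, ih₁, ih₂]

theorem length_le_length_Pcut_add_length_Rcut {F : List RTree} {c : List CutShape}
    (hc : c ∈ cutsF F) : F.length ≤ (Pcut F c).length + (Rcut F c).length := by
  induction F, c, hc using cutsF_induction with
  | nil => simp
  | full l ts cs _ ih => simp only [Pcut, Rcut, List.length_cons]; omega
  | branch l ts ds cs _ _ _ ih =>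
    simp only [Pcut, Rcut, List.length_cons, List.length_append]
    omega

theorem sizeL_Pcut_add_sizeL_Rcut {F : List RTree} {c : List CutShape} (hc : c ∈ cutsF F) :
    sizeL (Pcut F c) + sizeL (Rcut F c) = sizeL F := by
  induction F, c, hc using cutsF_induction with
  | nil => simp [Pcut, Rcut, sizeL]
  | full l ts cs _ ih => simp only [Pcut, Rcut, sizeL] at ih ⊢; omega
  | branch l ts ds cs _ _ ih₁ ih₂ => simp only [Pcut, Rcut, sizeL, sizeL_append] at ih₁ ih₂ ⊢; omega

theorem Rcut_eq_self_of_Pcut_eq_nil {F : List RTree} {c : List CutShape} (hc : c ∈ cutsF F)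
    (h : Pcut F c = []) : Rcut F c = F := by
  induction F, c, hc using cutsF_induction with
  | nil => simp [Rcut]
  | full l ts cs _ _ => simp [Pcut] at h
  | branch l ts ds cs _ _ ih₁ ih₂ =>
    obtain ⟨h₁, h₂⟩ := List.append_eq_nil_iff.1 (by simpa only [Pcut] using h)
    simp [Rcut, ih₁ h₁, ih₂ h₂]

theorem countP_cutsF_cons (p : List CutShape → Bool) (l ts : List RTree) :
    (cutsF (.node l :: ts)).countP p =
      (cutsF ts).countP (fun cs => p (.full :: cs)) +
        ((cutsF l).map fun ds => (cutsF ts).countP fun cs => p (.branch ds :: cs)).sum := by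
  simp [cutsF, List.countP_flatMap, Function.comp_def, List.countP_map]

theorem countP_Pcut_eq_nil : ∀ F : List RTree, (cutsF F).countP (fun c => Pcut F c = []) = 1
  | [] => by simp [cutsF, Pcut]
  | .node l :: ts => by
    have hbranch (ds : List CutShape) :
        (cutsF ts).countP (fun cs => Pcut (.node l :: ts) (.branch ds :: cs) = []) =
          if Pcut l ds = [] then 1 else 0 := by
      by_cases h : Pcut l ds = [] <;> simp [Pcut, h, countP_Pcut_eq_nil ts]
    rw [countP_cutsF_cons, List.map_congr_left fun ds _ => hbranch ds,
      List.sum_map_ite_eq_countP, countP_Pcut_eq_nil l]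
    simp [Pcut]

theorem clF_eq_singleton_iff {F : List RTree} {S : TreeClass} :
    clF F = {S} ↔ ∃ t, F = [t] ∧ clT t = S := by
  rcases F with _ | ⟨t, _ | ⟨t', F⟩⟩ <;> simp [clF]

theorem countP_Rcut_eq_nil_singleton (t : RTree) :
    (cutsF [t]).countP (fun c => Rcut [t] c = []) = 1 := by
  obtain ⟨l⟩ := t
  rw [countP_cutsF_cons]
  simp [cutsF, Rcut]

theorem Pcut_singleton_of_Rcut_eq_nil {t : RTree} {c : List CutShape} (hc : c ∈ cutsF [t])
    (h : Rcut [t] c = []) : Pcut [t] c = [t] := by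
  obtain ⟨l⟩ := t
  obtain ⟨cs, hcs, rfl⟩ | ⟨ds, hds, cs, hcs, rfl⟩ := mem_cutsF_cons.1 hc
  · obtain rfl := mem_cutsF_nil.1 hcs
    simp [Pcut]
  · simp [Rcut] at h

theorem Pcut_Rcut_full_cons_eq_singleton_iff {l₁ : List RTree} {t₂ : RTree} {cs : List CutShape}
    (hcs : cs ∈ cutsF [t₂]) (S T : TreeClass) :
    (clF (Pcut [.node l₁, t₂] (.full :: cs)) = {S} ∧
        clF (Rcut [.node l₁, t₂] (.full :: cs)) = {T}) ↔
      (clT (.node l₁) = S ∧ clT t₂ = T) ∧ Pcut [t₂] cs = [] := by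
  simp only [Pcut, Rcut, clF_eq_singleton_iff, List.cons.injEq]
  constructor
  · rintro ⟨⟨t, ⟨rfl, hP⟩, rfl⟩, u, hR, rfl⟩
    rw [Rcut_eq_self_of_Pcut_eq_nil hcs hP, List.singleton_inj] at hR
    exact ⟨⟨rfl, by rw [hR]⟩, hP⟩
  · rintro ⟨⟨rfl, rfl⟩, hP⟩
    exact ⟨⟨_, ⟨rfl, hP⟩, rfl⟩, t₂, Rcut_eq_self_of_Pcut_eq_nil hcs hP, rfl⟩

theorem Pcut_Rcut_branch_cons_eq_singleton_iff {l₁ : List RTree} {t₂ : RTree}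
    {ds cs : List CutShape} (hds : ds ∈ cutsF l₁) (hcs : cs ∈ cutsF [t₂]) (S T : TreeClass) :
    (clF (Pcut [.node l₁, t₂] (.branch ds :: cs)) = {S} ∧
        clF (Rcut [.node l₁, t₂] (.branch ds :: cs)) = {T}) ↔
      ((clT t₂ = S ∧ clT (.node l₁) = T) ∧ Pcut l₁ ds = []) ∧ Rcut [t₂] cs = [] := by
  simp only [Pcut, Rcut, clF_eq_singleton_iff, List.cons.injEq]
  constructor
  · rintro ⟨⟨t, hP, rfl⟩, u, ⟨rfl, hR⟩, rfl⟩
    rw [Pcut_singleton_of_Rcut_eq_nil hcs hR, List.append_eq_singleton_iff] at hP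
    obtain ⟨hP, ht⟩ | ⟨-, h⟩ := hP
    · obtain rfl := List.singleton_inj.1 ht
      rw [Rcut_eq_self_of_Pcut_eq_nil hds hP]
      exact ⟨⟨⟨rfl, rfl⟩, hP⟩, hR⟩
    · simp at h
  · rintro ⟨⟨⟨rfl, rfl⟩, hP⟩, hR⟩
    refine ⟨⟨t₂, ?_, rfl⟩, _, ⟨rfl, hR⟩, by rw [Rcut_eq_self_of_Pcut_eq_nil hds hP]⟩
    rw [hP, Pcut_singleton_of_Rcut_eq_nil hcs hR, List.nil_append]

theorem countP_cutsF_pair (t₁ t₂ : RTree) (S T : TreeClass) :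
    (cutsF [t₁, t₂]).countP
        (fun c => clF (Pcut [t₁, t₂] c) = {S} ∧ clF (Rcut [t₁, t₂] c) = {T}) =
      (if clT t₁ = S ∧ clT t₂ = T then 1 else 0) + (if clT t₂ = S ∧ clT t₁ = T then 1 else 0) := by
  obtain ⟨l₁⟩ := t₁
  rw [countP_cutsF_cons]
  congr 1
  · rw [List.countP_decide_congr fun cs hcs => Pcut_Rcut_full_cons_eq_singleton_iff hcs S T,
      List.countP_const_and, countP_Pcut_eq_nil]
  · rw [List.map_congr_left fun ds hds => (List.countP_decide_congr fun cs hcs =>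
        Pcut_Rcut_branch_cons_eq_singleton_iff hds hcs S T).trans (List.countP_const_and _ _ _),
      countP_Rcut_eq_nil_singleton, List.sum_map_ite_eq_countP, List.countP_const_and,
      countP_Pcut_eq_nil]

theorem sizeL_perm {F G : List RTree} (h : F.Perm G) : sizeL F = sizeL G := by
  induction h with
  | nil => rfl
  | @cons t F G _ ih => rw [sizeL_cons t F, sizeL_cons t G, ih]
  | swap t u F =>
    rw [sizeL_cons t (u :: F), sizeL_cons u F, sizeL_cons u (t :: F), sizeL_cons t F]
    omega
  | trans _ _ ih₁ ih₂ => exact ih₁.trans ih₂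

mutual
theorem sizeL_eq_of_iso : ∀ {t u : RTree}, Iso t u → sizeL [t] = sizeL [u]
  | _, _, .node hF hp => by
    simp only [sizeL, sizeL_eq_of_forall₂_iso hF, sizeL_perm hp]

theorem sizeL_eq_of_forall₂_iso : ∀ {F G : List RTree}, List.Forall₂ Iso F G → sizeL F = sizeL G
  | _, _, .nil => rfl
  | _, _, .cons (a := t) (b := u) (l₁ := F) (l₂ := G) h hs => by
    rw [sizeL_cons t F, sizeL_cons u G, sizeL_eq_of_iso h, sizeL_eq_of_forall₂_iso hs]
end

def treeSize : TreeClass → ℕ := Quot.lift (fun t => sizeL [t]) fun _ _ => sizeL_eq_of_iso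

theorem sizeL_eq_sum_map_treeSize (F : List RTree) : sizeL F = ((clF F).map treeSize).sum := by
  induction F with
  | nil => simp [sizeL, clF]
  | cons t F ih => rw [sizeL_cons t F, ih]; simp [clF, clT, treeSize]

theorem clT_repT (T : TreeClass) : clT (repT T) = T := Quot.out_eq T

theorem clF_repF (M : ForestClass) : clF (repF M) = M := by
  simp only [clF, repF, List.map_map]
  rw [show clT ∘ Quot.out = id from funext Quot.out_eq, List.map_id, Multiset.coe_toList]

theorem sizeC_clF (F : List RTree) : sizeC (clF F) = sizeL F := by
  rw [sizeC, sizeL_eq_sum_map_treeSize, clF_repF, ← sizeL_eq_sum_map_treeSize]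

theorem repF_singleton (T : TreeClass) : repF {T} = [repT T] := by
  simp [repF, repT]

theorem sizeC_singleton (T : TreeClass) : sizeC {T} = sizeT T := by
  rw [sizeC, repF_singleton, sizeT]

theorem clF_eq_of_forall₂_perm {F G w : List RTree} (hF : List.Forall₂ Iso F w) (hw : w.Perm G) :
    clF F = clF G := by
  rw [clF, clF, ← Multiset.coe_eq_coe.2 (hw.map clT)]
  congr 1
  clear hw
  induction hF with
  | nil => rfl
  | cons h _ ih => rw [List.map_cons, List.map_cons, ih, clT, clT, Quot.sound h]

theorem exists_mem_forestsUpTo {n : ℕ} {F : List RTree} (hF : sizeL F ≤ n) :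
    ∃ F' ∈ forestsUpTo n, ∃ w, List.Forall₂ Iso F' w ∧ w.Perm F := by
  induction n generalizing F with
  | zero =>
    obtain rfl : F = [] := by
      rcases F with _ | ⟨⟨l⟩, F⟩
      · rfl
      · simp [sizeL] at hF
    exact ⟨[], by simp [forestsUpTo], [], .nil, .refl _⟩
  | succ n ih =>
    rcases F with _ | ⟨⟨l⟩, F⟩
    · exact ⟨[], by simp [forestsUpTo], [], .nil, .refl _⟩
    · simp only [sizeL] at hF
      obtain ⟨l', hl', wl, hwl, hwlp⟩ := ih (F := l) (by omega)
      obtain ⟨F', hF', w, hw, hwp⟩ := ih (F := F) (by omega)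
      refine ⟨.node l' :: F', ?_, .node l :: w, .cons (.node hwl hwlp) hw, hwp.cons _⟩
      simp only [forestsUpTo, List.mem_cons, List.mem_flatMap, List.mem_map]
      exact .inr ⟨l', hl', F', hF', rfl⟩

theorem mem_forestCand {M : ForestClass} {n : ℕ} (h : sizeC M ≤ n) : M ∈ forestCand n := by
  obtain ⟨F', hF', w, hw, hwp⟩ := exists_mem_forestsUpTo h
  simp only [forestCand, List.mem_toFinset, List.mem_map]
  exact ⟨F', hF', by rw [clF_eq_of_forall₂_perm hw hwp, clF_repF]⟩

theorem mem_treeCand {T : TreeClass} {n : ℕ} (h : sizeT T ≤ n + 1) : T ∈ treeCand n := by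
  obtain ⟨l, hl⟩ : ∃ l, repT T = .node l := by cases repT T; exact ⟨_, rfl⟩
  rw [sizeT, hl] at h
  simp only [sizeL] at h
  obtain ⟨l', hl', w, hw, hwp⟩ := exists_mem_forestsUpTo (n := n) (F := l) (by omega)
  simp only [treeCand, List.mem_toFinset, List.mem_map]
  exact ⟨l', hl', by rw [clT, Quot.sound (Iso.node hw hwp), ← hl]; exact clT_repT T⟩

theorem sizeC_eq_of_nCuts_ne_zero {A B M : ForestClass} (h : nCuts A B M ≠ 0) :
    sizeC M = sizeC A + sizeC B := by
  obtain ⟨c, hc, hAB⟩ := List.countP_pos_iff.1 (Nat.pos_of_ne_zero h)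
  obtain ⟨rfl, rfl⟩ := of_decide_eq_true hAB
  rw [sizeC_clF, sizeC_clF, sizeL_Pcut_add_sizeL_Rcut hc, ← sizeC_clF, clF_repF]

theorem sizeT_eq_of_aCount_ne_zero {S T U : TreeClass} (h : aCount S T U ≠ 0) :
    sizeT U = sizeT S + sizeT T := by
  obtain ⟨c, hc, hST⟩ := List.countP_pos_iff.1 (Nat.pos_of_ne_zero h)
  obtain ⟨-, hS, hT⟩ := of_decide_eq_true hST
  rw [sizeT, ← sizeC_singleton S, ← sizeC_singleton T, ← hS, ← hT, sizeC_clF, sizeC_clF,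
    sizeL_Pcut_add_sizeL_Rcut hc]

theorem mulBasis_apply (A B M : ForestClass) : mulBasis A B M = nCuts A B M := by
  simp only [mulBasis, delta]
  refine Finsupp.finsetSum_smul_single_one_apply fun hM => ?_
  by_contra h
  exact hM (mem_forestCand (sizeC_eq_of_nCuts_ne_zero (by exact_mod_cast h)).le)

theorem graftBasis_apply (S T U : TreeClass) : graftBasis S T U = aCount S T U := by
  simp only [graftBasis, tau]
  refine Finsupp.finsetSum_smul_single_one_apply fun hU => ?_
  by_contra h
  have := sizeT_eq_of_aCount_ne_zero (by exact_mod_cast h)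
  exact hU (mem_treeCand (by omega))

theorem nCuts_singleton (S T U : TreeClass) : nCuts {S} {T} {U} = aCount S T U := by
  rw [nCuts, aCount, repF_singleton]
  refine List.countP_congr fun c hc => ?_
  simp only [decide_eq_true_eq, iff_and_self]
  rintro ⟨hP, -⟩
  obtain ⟨t, ht, -⟩ := clF_eq_singleton_iff.1 hP
  rw [← length_Pcut hc, ht, List.length_singleton]

theorem countP_cutsF_singleton_singleton_of_two_lt_length {F : List RTree} (hF : 2 < F.length)
    (S T : TreeClass) :
    (cutsF F).countP (fun c => clF (Pcut F c) = {S} ∧ clF (Rcut F c) = {T}) = 0 := by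
  refine List.countP_eq_zero.2 fun c hc h => ?_
  obtain ⟨⟨t, hP, -⟩, ⟨u, hR, -⟩⟩ := (of_decide_eq_true h).imp clF_eq_singleton_iff.1
    clF_eq_singleton_iff.1
  have := length_le_length_Pcut_add_length_Rcut hc
  rw [hP, hR] at this
  simp only [List.length_singleton] at this
  omega

theorem nCuts_comm {M : ForestClass} (hM : ∀ U, M ≠ {U}) (S T : TreeClass) :
    nCuts {S} {T} M = nCuts {T} {S} M := by
  have hF : ∀ t, repF M ≠ [t] := fun t h => hM (clT t) (by rw [← clF_repF M, h]; rfl)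
  unfold nCuts
  generalize repF M = F at hF
  rcases F with _ | ⟨t₁, _ | ⟨t₂, _ | ⟨t₃, F⟩⟩⟩
  · simp [cutsF, Pcut, clF]
  · exact absurd rfl (hF t₁)
  · rw [countP_cutsF_pair, countP_cutsF_pair, add_comm]
    simp only [and_comm]
  · rw [countP_cutsF_singleton_singleton_of_two_lt_length (by simp),
      countP_cutsF_singleton_singleton_of_two_lt_length (by simp)]

theorem singleton_injective : Function.Injective fun T : TreeClass => ({T} : ForestClass) :=
  fun _ _ => Multiset.singleton_inj.1

theorem embed_apply_singleton (x : nT) (T : TreeClass) : embed x {T} = x T :=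
  Finsupp.mapDomain_apply singleton_injective x T

theorem embed_apply_of_forall_ne_singleton (x : nT) {M : ForestClass} (hM : ∀ U, M ≠ {U}) :
    embed x M = 0 :=
  Finsupp.mapDomain_of_notMem_range x M fun ⟨U, hU⟩ => hM U hU.symm

theorem embed_graftBasis_sub_mulBasis_comm (S T : TreeClass) :
    embed (graftBasis S T) - mulBasis {S} {T} = embed (graftBasis T S) - mulBasis {T} {S} := by
  ext M
  simp only [Finsupp.sub_apply, mulBasis_apply]
  by_cases hM : ∃ U, M = {U}
  · obtain ⟨U, rfl⟩ := hM
    simp only [embed_apply_singleton, graftBasis_apply, nCuts_singleton, sub_self]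
  · push Not at hM
    rw [embed_apply_of_forall_ne_singleton _ hM, embed_apply_of_forall_ne_singleton _ hM,
      nCuts_comm hM]

theorem hmul_embed_embed (x y : nT) :
    hmul (embed x) (embed y) = x.sum fun S a => y.sum fun T b => (a * b) • mulBasis {S} {T} := by
  unfold hmul embed
  simp only [Finsupp.lmapDomain_apply]
  rw [Finsupp.sum_mapDomain_index (by simp) fun _ _ _ => by
    simp only [add_mul, add_smul, Finsupp.sum_add]]
  refine Finsupp.sum_congr fun S _ => ?_
  exact Finsupp.sum_mapDomain_index (by simp) fun _ _ _ => by rw [mul_add, add_smul]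

theorem embed_graft (x y : nT) :
    embed (graft x y) = x.sum fun S a => y.sum fun T b => (a * b) • embed (graftBasis S T) := by
  simp only [graft, map_finsuppSum, map_smul]

theorem embed_ckBracket (x y : nT) :
    embed (ckBracket x y) = hmul (embed x) (embed y) - hmul (embed y) (embed x) := by
  rw [ckBracket, map_sub, sub_eq_sub_iff_sub_eq_sub, hmul_embed_embed, hmul_embed_embed,
    embed_graft, embed_graft]
  simp only [← Finsupp.sum_sub, ← smul_sub]
  exact Finsupp.sum_sum_smul_comm x y embed_graftBasis_sub_mulBasis_comm

theorem deltaBasis_apply (M A B : ForestClass) :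
    deltaBasis M (A, B) = if M = A + B then 1 else 0 := by
  have hsplit : (A ≤ M ∧ M - A = B) ↔ M = A + B := by
    constructor
    · rintro ⟨h, rfl⟩
      exact (add_tsub_cancel_of_le h).symm
    · rintro rfl
      simp
  simp only [deltaBasis, Finsupp.finsetSum_apply, Finsupp.single_apply, Prod.mk.injEq, ite_and]
  rw [Finset.sum_ite_eq']
  simp only [Multiset.mem_toFinset, Multiset.mem_powerset, ← hsplit, ← ite_and]

theorem coprod_apply (f : H) (A B : ForestClass) : coprod f (A, B) = f (A + B) := by
  simp only [coprod, Finsupp.lsum_apply, LinearMap.toSpanSingleton_apply, Finsupp.sum_apply,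
    Finsupp.smul_apply, deltaBasis_apply, smul_eq_mul, mul_ite, mul_one, mul_zero]
  exact Finsupp.sum_ite_self_eq' f (A + B)

theorem mem_range_embed_iff (f : H) : f ∈ Set.range embed ↔ ∀ M, (∀ U, M ≠ {U}) → f M = 0 := by
  refine (Finsupp.mem_range_mapDomain_iff _ singleton_injective f).trans ?_
  simp only [Set.mem_range, not_exists, ne_comm]

/-- `T ↦ δ_T` is an injective homomorphism of Lie algebras from
`n_T` (with the Connes–Kreimer bracket) to `H` with the commutator bracket
`[f,g] = f×g − g×f`, and its image is exactly the space of primitive elements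
of `H`. -/
theorem nT_to_H_injective_LieHom_image_primitives :
    Function.Injective embed ∧
    (∀ x y : nT,
      embed (ckBracket x y) = hmul (embed x) (embed y) - hmul (embed y) (embed x)) ∧
    Set.range embed
      = {f : H | coprod f
          = Finsupp.mapDomain (fun M => (M, (0 : ForestClass))) f
            + Finsupp.mapDomain (fun M => ((0 : ForestClass), M)) f} := by
  refine ⟨Finsupp.mapDomain_injective singleton_injective, embed_ckBracket, Set.ext fun f => ?_⟩
  rw [mem_range_embed_iff, Multiset.forall_ne_singleton_imp_eq_zero_iff, Set.mem_ofPred_eq,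
    Finsupp.ext_iff, Prod.forall]
  simp only [coprod_apply, Finsupp.add_apply, Finsupp.mapDomain_prodMk_left_apply,
    Finsupp.mapDomain_prodMk_right_apply]

end CK
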